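/- Let X = (X_n)_{n∈ℤ} be a discrete white noise and let p > 0. Then ℙ(sup_{n∈ℤ} |X_n|/(1+|n|)^{1/p} < ∞) = 1 if and only if 𝔼[|X_0|^p] < ∞; moreover, if 𝔼[|X_0|^p] = ∞, then ℙ(sup_{n∈ℤ} |X_n|/(1+|n|)^{1/p} < ∞) = 0. -/

import Mathlib

/-!
Put `Y = |X₀|^p`. By identical distribution, `ℙ(|Xₙ| > C (1+|n|)^{1/p}) = ℙ(Y > C^p (1+|n|))`, and
the discrete layer-cake bounds `𝔼 Y ≤ ∑_{n ≥ 0} ℙ(Y > n) ≤ 𝔼 Y + 1` show that these probabilities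
are summable in `n` exactly when `𝔼 Y < ∞`. If `𝔼 Y < ∞`, the first Borel–Cantelli lemma (with
`C = 1`) says that a.s. only finitely many `n` violate the bound, and those are absorbed into the
constant. If `𝔼 Y = ∞`, then for every `C` the events are independent with divergent sum, so by the
second Borel–Cantelli lemma a.s. the bound with constant `C` fails infinitely often.
-/

open MeasureTheory ProbabilityTheory Filter
open scoped ENNReal

section LayerCake

variable {Ω : Type*} [MeasurableSpace Ω] {μ : Measure Ω}

lemma tsum_ite_natCast_lt_eq_ceil (y : ℝ) :
    ∑' n : ℕ, (if (n : ℝ) < y then 1 else 0 : ℝ≥0∞) = ⌈y⌉₊ := by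
  simp_rw [← Nat.lt_ceil]
  rw [tsum_eq_sum (s := Finset.range ⌈y⌉₊) (by simp),
    Finset.sum_ite_of_true fun n hn => Finset.mem_range.1 hn]
  simp

lemma tsum_measure_natCast_lt_eq_lintegral_ceil {Y : Ω → ℝ} (hY : Measurable Y) :
    ∑' n : ℕ, μ {ω | (n : ℝ) < Y ω} = ∫⁻ ω, (⌈Y ω⌉₊ : ℝ≥0∞) ∂μ := by
  have hmeas (n : ℕ) : MeasurableSet {ω | (n : ℝ) < Y ω} := measurableSet_lt measurable_const hY
  simp_rw [← tsum_ite_natCast_lt_eq_ceil]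
  rw [lintegral_tsum fun n =>
    (Measurable.ite (hmeas n) measurable_const measurable_const).aemeasurable]
  congr 1 with n
  rw [← lintegral_indicator_one (hmeas n)]
  rfl

lemma natCeil_le_ofReal_add_one (y : ℝ) : (⌈y⌉₊ : ℝ≥0∞) ≤ ENNReal.ofReal y + 1 := by
  rcases le_total y 0 with hy | hy
  · simp [Nat.ceil_eq_zero.2 hy]
  · rw [← ENNReal.ofReal_natCast, ← ENNReal.ofReal_one, ← ENNReal.ofReal_add hy zero_le_one]
    exact ENNReal.ofReal_le_ofReal (Nat.ceil_lt_add_one hy).le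

lemma lintegral_ofReal_lt_top_iff_tsum_measure_natCast_lt_lt_top [IsFiniteMeasure μ]
    {Y : Ω → ℝ} (hY : Measurable Y) :
    ∫⁻ ω, ENNReal.ofReal (Y ω) ∂μ < ∞ ↔ ∑' n : ℕ, μ {ω | (n : ℝ) < Y ω} < ∞ := by
  rw [tsum_measure_natCast_lt_eq_lintegral_ceil hY]
  refine ⟨fun h => ?_, fun h => ?_⟩
  · calc ∫⁻ ω, (⌈Y ω⌉₊ : ℝ≥0∞) ∂μ ≤ ∫⁻ ω, (ENNReal.ofReal (Y ω) + 1) ∂μ :=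
          lintegral_mono fun ω => natCeil_le_ofReal_add_one (Y ω)
      _ = ∫⁻ ω, ENNReal.ofReal (Y ω) ∂μ + μ Set.univ := by
          rw [lintegral_add_right _ measurable_const, lintegral_one]
      _ < ∞ := ENNReal.add_lt_top.2 ⟨h, measure_lt_top μ _⟩
  · refine lt_of_le_of_lt (lintegral_mono fun ω => ?_) h
    rw [← ENNReal.ofReal_natCast]
    exact ENNReal.ofReal_le_ofReal (Nat.le_ceil _)

end LayerCake

lemma tsum_int_comp_natAbs_le_two_mul (g : ℕ → ℝ≥0∞) :
    ∑' n : ℤ, g n.natAbs ≤ 2 * ∑' n : ℕ, g n :=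
  calc ∑' n : ℤ, g n.natAbs ≤ ∑' n : ℤ, g n.natAbs + g (0 : ℤ).natAbs := le_self_add
    _ = ∑' n : ℕ, (g n + g n) := by
      rw [← tsum_nat_add_neg (f := fun n : ℤ => g n.natAbs) ENNReal.summable]; simp
    _ = 2 * ∑' n : ℕ, g n := by rw [ENNReal.tsum_add, two_mul]

lemma mul_rpow_one_div_lt_abs_iff {C t p x : ℝ} (hC : 0 < C) (ht : 0 ≤ t) (hp : 0 < p) :
    C * t ^ (1 / p) < |x| ↔ t < (|x| / C) ^ p := by
  rw [← lt_div_iff₀' hC, one_div, Real.rpow_inv_lt_iff_of_pos ht (by positivity) hp]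

lemma ProbabilityTheory.IdentDistrib.measure_mul_rpow_one_div_lt_abs
    {Ω Ω' : Type*} [MeasurableSpace Ω] [MeasurableSpace Ω'] {μ : Measure Ω} {ν : Measure Ω'}
    {f : Ω → ℝ} {g : Ω' → ℝ} (h : IdentDistrib f g μ ν) {C t p : ℝ}
    (hC : 0 < C) (ht : 0 ≤ t) (hp : 0 < p) :
    μ {ω | C * t ^ (1 / p) < |f ω|} = ν {ω | t < (|g ω| / C) ^ p} := by
  simp_rw [← mul_rpow_one_div_lt_abs_iff hC ht hp]
  exact h.measure_mem_eq (measurableSet_lt measurable_const continuous_abs.measurable)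

lemma ProbabilityTheory.iIndepFun.iIndepSet_preimage {Ω ι : Type*} [MeasurableSpace Ω]
    {μ : Measure Ω} {β : ι → Type*} [∀ i, MeasurableSpace (β i)] {f : ∀ i, Ω → β i}
    (h : iIndepFun f μ) {s : ∀ i, Set (β i)} (hs : ∀ i, MeasurableSet (s i)) :
    iIndepSet (fun i => f i ⁻¹' s i) μ := by
  rw [iIndepSet_iff_iIndep]
  refine iIndep_of_iIndep_of_le ((iIndepFun_iff_iIndep _ _ _).1 h) fun i => ?_
  exact MeasurableSpace.generateFrom_le (by rintro _ rfl; exact ⟨s i, hs i, rfl⟩)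

section BorelCantelli

variable {Ω : Type*} [MeasurableSpace Ω] {μ : Measure Ω}

lemma ae_exists_forall_abs_le_mul_of_tsum_ne_top {ι : Type*} [Countable ι]
    {f : ι → Ω → ℝ} {w : ι → ℝ} (hw : ∀ i, 0 < w i)
    (h : ∑' i, μ {ω | w i < |f i ω|} ≠ ∞) :
    ∀ᵐ ω ∂μ, ∃ C, ∀ i, |f i ω| ≤ C * w i := by
  filter_upwards [ae_finite_setOfPred_mem h] with ω hfin
  have hO : (fun i => f i ω) =O[cofinite] w := by
    refine Asymptotics.IsBigO.of_bound 1 (eventually_cofinite.2 (hfin.subset fun i hi => ?_))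
    simpa [abs_of_pos (hw i)] using hi
  obtain ⟨C, hC⟩ := (Asymptotics.isBigO_cofinite_iff fun i hi => absurd hi (hw i).ne').1 hO
  exact ⟨C, fun i => by simpa [abs_of_pos (hw i)] using hC i⟩

lemma measure_forall_abs_le_eq_zero_of_tsum_eq_top [IsProbabilityMeasure μ]
    {f : ℕ → Ω → ℝ} (hf : ∀ n, Measurable (f n)) (hindep : iIndepFun f μ) {w : ℕ → ℝ}
    (h : ∑' n, μ {ω | w n < |f n ω|} = ∞) :
    μ {ω | ∀ n, |f n ω| ≤ w n} = 0 := by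
  have hs (n : ℕ) : MeasurableSet {x : ℝ | w n < |x|} :=
    measurableSet_lt measurable_const continuous_abs.measurable
  set B : ℕ → Set Ω := fun n => f n ⁻¹' {x | w n < |x|}
  have hB : MeasurableSet (limsup B atTop) :=
    MeasurableSet.measurableSet_limsup fun n => hf n (hs n)
  have hlimsup : μ (limsup B atTop) = 1 :=
    measure_limsup_eq_one (fun n => hf n (hs n)) (hindep.iIndepSet_preimage hs) h
  refine measure_mono_null ?_ ((prob_compl_eq_zero_iff hB).2 hlimsup)
  intro ω hω hmem
  obtain ⟨n, hn⟩ := (mem_limsup_iff_frequently_mem.1 hmem).exists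
  exact (hω n).not_gt hn

end BorelCantelli

section WhiteNoise

variable {Ω : Type*} [MeasurableSpace Ω] {P : Measure Ω} {X : ℤ → Ω → ℝ} {p : ℝ}

lemma tsum_measure_weight_lt_abs_lt_top [IsFiniteMeasure P] (hX : Measurable (X 0))
    (hident : ∀ n : ℤ, IdentDistrib (X n) (X 0) P P) (hp : 0 < p)
    (hmom : ∫⁻ ω, ENNReal.ofReal (|X 0 ω| ^ p) ∂P < ∞) :
    ∑' n : ℤ, P {ω | (1 + |(n : ℝ)|) ^ (1 / p) < |X n ω|} < ∞ := by
  have hY : Measurable fun ω => |X 0 ω| ^ p := hX.abs.pow_const p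
  have hterm (n : ℤ) : P {ω | (1 + |(n : ℝ)|) ^ (1 / p) < |X n ω|}
      ≤ P {ω | (n.natAbs : ℝ) < |X 0 ω| ^ p} := by
    have hdist := (hident n).measure_mul_rpow_one_div_lt_abs (t := 1 + |(n : ℝ)|) one_pos
      (by positivity) hp
    simp only [one_mul, div_one] at hdist
    rw [hdist]
    refine measure_mono fun ω (hω : 1 + |(n : ℝ)| < _) => ?_
    rw [Set.mem_ofPred_eq, Nat.cast_natAbs, Int.cast_abs]
    linarith
  calc ∑' n : ℤ, P {ω | (1 + |(n : ℝ)|) ^ (1 / p) < |X n ω|}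
      ≤ ∑' n : ℤ, P {ω | (n.natAbs : ℝ) < |X 0 ω| ^ p} := ENNReal.tsum_le_tsum hterm
    _ ≤ 2 * ∑' n : ℕ, P {ω | (n : ℝ) < |X 0 ω| ^ p} := tsum_int_comp_natAbs_le_two_mul _
    _ < ∞ := ENNReal.mul_lt_top ENNReal.ofNat_lt_top
        ((lintegral_ofReal_lt_top_iff_tsum_measure_natCast_lt_lt_top hY).1 hmom)

lemma tsum_measure_mul_weight_lt_abs_eq_top [IsFiniteMeasure P] (hX : Measurable (X 0))
    (hident : ∀ n : ℤ, IdentDistrib (X n) (X 0) P P) (hp : 0 < p)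
    (hmom : ∫⁻ ω, ENNReal.ofReal (|X 0 ω| ^ p) ∂P = ∞) {C : ℝ} (hC : 0 < C) :
    ∑' n : ℕ, P {ω | C * (1 + (n : ℝ)) ^ (1 / p) < |X n ω|} = ∞ := by
  set Y : Ω → ℝ := fun ω => (|X 0 ω| / C) ^ p
  have hY : Measurable Y := (hX.abs.div_const C).pow_const p
  have hYmom : ∫⁻ ω, ENNReal.ofReal (Y ω) ∂P = ∞ := by
    have hscale (ω : Ω) : ENNReal.ofReal (Y ω)
        = ENNReal.ofReal (C ^ p)⁻¹ * ENNReal.ofReal (|X 0 ω| ^ p) := by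
      simp only [Y]
      rw [← ENNReal.ofReal_mul (by positivity), Real.div_rpow (abs_nonneg _) hC.le,
        div_eq_inv_mul]
    simp_rw [hscale]
    rw [lintegral_const_mul' _ _ ENNReal.ofReal_ne_top, hmom, ENNReal.mul_top]
    exact (ENNReal.ofReal_pos.2 (by positivity)).ne'
  have hsum : ∑' n : ℕ, P {ω | (n : ℝ) < Y ω} = ∞ := by
    by_contra hne
    exact (lintegral_ofReal_lt_top_iff_tsum_measure_natCast_lt_lt_top hY).2
      (lt_top_iff_ne_top.2 hne) |>.ne hYmom
  calc ∑' n : ℕ, P {ω | C * (1 + (n : ℝ)) ^ (1 / p) < |X n ω|}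
      = ∑' n : ℕ, P {ω | ((n + 1 : ℕ) : ℝ) < Y ω} := by
        refine tsum_congr fun n => ?_
        rw [(hident n).measure_mul_rpow_one_div_lt_abs hC (by positivity) hp, Nat.cast_succ,
          add_comm]
    _ = ∞ := ENNReal.tsum_add_one_eq_top hsum (measure_ne_top _ _)

lemma measure_exists_forall_abs_le_mul_weight_eq_one [IsProbabilityMeasure P]
    (hX : Measurable (X 0)) (hident : ∀ n : ℤ, IdentDistrib (X n) (X 0) P P) (hp : 0 < p)
    (hmom : ∫⁻ ω, ENNReal.ofReal (|X 0 ω| ^ p) ∂P < ∞) :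
    P {ω | ∃ C : ℝ, ∀ n : ℤ, |X n ω| ≤ C * (1 + |(n : ℝ)|) ^ (1 / p)} = 1 := by
  have hae := ae_exists_forall_abs_le_mul_of_tsum_ne_top (fun n : ℤ => by positivity)
    (tsum_measure_weight_lt_abs_lt_top hX hident hp hmom).ne
  rw [← measure_univ (μ := P)]
  exact measure_congr (ae_eq_univ.2 hae)

lemma measure_exists_forall_abs_le_mul_weight_eq_zero [IsProbabilityMeasure P]
    (hmeas : ∀ n, Measurable (X n)) (hindep : iIndepFun X P)
    (hident : ∀ n : ℤ, IdentDistrib (X n) (X 0) P P) (hp : 0 < p)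
    (hmom : ∫⁻ ω, ENNReal.ofReal (|X 0 ω| ^ p) ∂P = ∞) :
    P {ω | ∃ C : ℝ, ∀ n : ℤ, |X n ω| ≤ C * (1 + |(n : ℝ)|) ^ (1 / p)} = 0 := by
  have hnull (k : ℕ) : P {ω | ∀ n : ℕ, |X n ω| ≤ (k + 1) * (1 + (n : ℝ)) ^ (1 / p)} = 0 :=
    measure_forall_abs_le_eq_zero_of_tsum_eq_top (fun n => hmeas n)
      (hindep.precomp Nat.cast_injective)
      (tsum_measure_mul_weight_lt_abs_eq_top (hmeas 0) hident hp hmom k.cast_add_one_pos)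
  refine measure_mono_null (fun ω ⟨C, hC⟩ => ?_) (measure_iUnion_null hnull)
  obtain ⟨k, hk⟩ := exists_nat_ge C
  refine Set.mem_iUnion.2 ⟨k, fun n => ?_⟩
  calc |X n ω| ≤ C * (1 + (n : ℝ)) ^ (1 / p) := by simpa using hC n
    _ ≤ (k + 1) * (1 + (n : ℝ)) ^ (1 / p) := by gcongr; linarith

end WhiteNoise

/-- For a discrete white noise `X` and `p > 0`, one has
`sup_n |X_n|/(1+|n|)^{1/p} < ∞` almost surely iff `𝔼[|X_0|^p] < ∞`; if the moment is
infinite, the probability is `0`. -/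
theorem weighted_linfty_iff_finite_moment
    {Ω : Type*} [MeasurableSpace Ω] (P : Measure Ω) [IsProbabilityMeasure P]
    (X : ℤ → Ω → ℝ) (hmeas : ∀ n, Measurable (X n))
    (hindep : iIndepFun X P)
    (hident : ∀ n : ℤ, IdentDistrib (X n) (X 0) P P)
    (p : ℝ) (hp : 0 < p) :
    (P {ω | ∃ C : ℝ, ∀ n : ℤ, |X n ω| ≤ C * (1 + |(n : ℝ)|) ^ (1 / p)} = 1 ↔
      (∫⁻ ω, ENNReal.ofReal (|X 0 ω| ^ p) ∂P) < ⊤) ∧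
    ((∫⁻ ω, ENNReal.ofReal (|X 0 ω| ^ p) ∂P) = ⊤ →
      P {ω | ∃ C : ℝ, ∀ n : ℤ, |X n ω| ≤ C * (1 + |(n : ℝ)|) ^ (1 / p)} = 0) := by
  have hzero := measure_exists_forall_abs_le_mul_weight_eq_zero hmeas hindep hident hp
  refine ⟨⟨fun hone => lt_top_iff_ne_top.2 fun hmom => ?_,
    measure_exists_forall_abs_le_mul_weight_eq_one (hmeas 0) hident hp⟩, hzero⟩
  exact zero_ne_one ((hzero hmom).symm.trans hone)
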